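/- arXiv:2011.10944 — 3 statements merged into one kernel-verified Lean document; each statement's English description precedes it below -/
import Mathlib

section
/- Let g₁, g₂ : ℝ^P → ℝⁿ be maps that are differentiable at θ₀ ∈ ℝ^P, and let W be an n×n real matrix such that ‖W·g₂(θ₀)‖ = 1 (with respect to the Euclidean inner product on ℝⁿ). For any n×n real matrix V with ‖V·g₂(θ₀)‖ = 1, define the projected alignment θ-gradient at (θ₀, V) as the linear functional G_V : ℝ^P → ℝ given by G_V(h) = 2·⟨ Π_V( V·g₁(θ₀) − V·g₂(θ₀) ), V·(Dg₁(θ₀)(h) − Dg₂(θ₀)(h)) ⟩, where Π_V(v) = v − ⟨v, V·g₂(θ₀)⟩·V·g₂(θ₀) and Dg_i(θ₀) denotes the Fréchet derivative of g_i at θ₀. Then G_{−W} = G_W as linear functionals on ℝ^P. -/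
open RealInnerProductSpace

theorem neg_sub_neg_sub_inner_smul_neg {E : Type*} [NormedAddCommGroup E]
    [InnerProductSpace ℝ E] (a b p : E) :
    (-a - -b) - ⟪-a - -b, -p⟫ • -p = -((a - b) - ⟪a - b, p⟫ • p) := by
  rw [← neg_sub', inner_neg_neg, smul_neg]
  abel

theorem projected_alignment_theta_grad_neg_eq_general
    {P n : ℕ}
    (g₁ g₂ : EuclideanSpace ℝ (Fin P) → EuclideanSpace ℝ (Fin n))
    (θ₀ : EuclideanSpace ℝ (Fin P))
    (W : Matrix (Fin n) (Fin n) ℝ)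
    (G : Matrix (Fin n) (Fin n) ℝ → EuclideanSpace ℝ (Fin P) → ℝ)
    (hG : ∀ (V : Matrix (Fin n) (Fin n) ℝ) (h : EuclideanSpace ℝ (Fin P)),
      G V h =
        2 * ⟪(Matrix.toEuclideanLin V (g₁ θ₀) - Matrix.toEuclideanLin V (g₂ θ₀)) -
              ⟪Matrix.toEuclideanLin V (g₁ θ₀) - Matrix.toEuclideanLin V (g₂ θ₀),
                Matrix.toEuclideanLin V (g₂ θ₀)⟫ • Matrix.toEuclideanLin V (g₂ θ₀),
            Matrix.toEuclideanLin V (fderiv ℝ g₁ θ₀ h - fderiv ℝ g₂ θ₀ h)⟫) :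
    G (-W) = G W := by
  funext h
  -- both arguments of the inner product change sign with `V`
  simp only [hG, map_neg, LinearMap.neg_apply, neg_sub_neg_sub_inner_smul_neg, inner_neg_neg]

/-- The tangential alignment-loss θ-gradients of BYOL′ (predictor `W`) and
RAFT (predictor `-W`) coincide. -/
theorem projected_alignment_theta_grad_neg_eq
    {P n : ℕ}
    (g₁ g₂ : EuclideanSpace ℝ (Fin P) → EuclideanSpace ℝ (Fin n))
    (θ₀ : EuclideanSpace ℝ (Fin P))
    (hg₁ : DifferentiableAt ℝ g₁ θ₀) (hg₂ : DifferentiableAt ℝ g₂ θ₀)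
    (W : Matrix (Fin n) (Fin n) ℝ)
    (hW : ‖Matrix.toEuclideanLin W (g₂ θ₀)‖ = 1)
    (G : Matrix (Fin n) (Fin n) ℝ → EuclideanSpace ℝ (Fin P) → ℝ)
    (hG : ∀ (V : Matrix (Fin n) (Fin n) ℝ) (h : EuclideanSpace ℝ (Fin P)),
      G V h =
        2 * ⟪(Matrix.toEuclideanLin V (g₁ θ₀) - Matrix.toEuclideanLin V (g₂ θ₀)) -
              ⟪Matrix.toEuclideanLin V (g₁ θ₀) - Matrix.toEuclideanLin V (g₂ θ₀),
                Matrix.toEuclideanLin V (g₂ θ₀)⟫ • Matrix.toEuclideanLin V (g₂ θ₀),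
            Matrix.toEuclideanLin V (fderiv ℝ g₁ θ₀ h - fderiv ℝ g₂ θ₀ h)⟫) :
    G (-W) = G W :=
  projected_alignment_theta_grad_neg_eq_general g₁ g₂ θ₀ W G hG
end

section
/- Let g₂ : ℝ^P → ℝⁿ be differentiable at θ₀ ∈ ℝ^P, let z̄ ∈ ℝⁿ be a fixed vector, and let W be an n×n real matrix with ‖W·g₂(θ₀)‖ = 1 (Euclidean norm). For any n×n real matrix V with ‖V·g₂(θ₀)‖ = 1, define the projected BYOL′ cross-model θ-gradient at (θ₀, V) as the linear functional B_V(h) = 2·⟨ Π_V( V·g₂(θ₀) − z̄ ), V·Dg₂(θ₀)(h) ⟩, and the projected RAFT cross-model θ-gradient at (θ₀, V) as R_V(h) = −2·⟨ Π_V( V·g₂(θ₀) − z̄ ), V·Dg₂(θ₀)(h) ⟩, where Π_V(v) = v − ⟨v, V·g₂(θ₀)⟩·V·g₂(θ₀). Then B_{−W} = R_W as linear functionals on ℝ^P. -/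
/-!
Write `Π_p v = v - ⟪v, p⟫ p` for the tangential component at `p`. It is unchanged when `p` is
replaced by `-p`, and for a unit vector `p` it kills `p`, so `Π_p (p - z̄) = -Π_p z̄`. With
`w = W g₂(θ₀)` and `u = W Dg₂(θ₀) h`, the BYOL′ gradient at `-W` is therefore
`2 ⟪Π_{-w}(-w - z̄), -u⟫ = 2 ⟪Π_w z̄, u⟫`, and so is the RAFT gradient at `W`,
`-2 ⟪Π_w (w - z̄), u⟫`.
-/

open RealInnerProductSpace

section TangentialComponent

variable {E : Type*} [NormedAddCommGroup E] [InnerProductSpace ℝ E]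

def tangentialComponent (p v : E) : E := v - ⟪v, p⟫ • p

theorem tangentialComponent_neg_left (p v : E) :
    tangentialComponent (-p) v = tangentialComponent p v := by
  simp only [tangentialComponent, inner_neg_right, neg_smul, smul_neg, neg_neg]

theorem tangentialComponent_self_sub {p : E} (hp : ‖p‖ = 1) (z : E) :
    tangentialComponent p (p - z) = -tangentialComponent p z := by
  have hpp : ⟪p, p⟫ = 1 := by rw [real_inner_self_eq_norm_sq, hp, one_pow]
  simp only [tangentialComponent, inner_sub_left, hpp, sub_smul, one_smul]
  abel

end TangentialComponent

theorem projected_cross_model_theta_grad_correspondence_general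
    {P n : ℕ}
    (g₂ : EuclideanSpace ℝ (Fin P) → EuclideanSpace ℝ (Fin n))
    (θ₀ : EuclideanSpace ℝ (Fin P))
    (zbar : EuclideanSpace ℝ (Fin n))
    (W : Matrix (Fin n) (Fin n) ℝ)
    (hW : ‖Matrix.toEuclideanLin W (g₂ θ₀)‖ = 1)
    (B R : Matrix (Fin n) (Fin n) ℝ → EuclideanSpace ℝ (Fin P) → ℝ)
    (hB : ∀ (V : Matrix (Fin n) (Fin n) ℝ) (h : EuclideanSpace ℝ (Fin P)),
      B V h =
        2 * ⟪(Matrix.toEuclideanLin V (g₂ θ₀) - zbar) -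
              ⟪Matrix.toEuclideanLin V (g₂ θ₀) - zbar,
                Matrix.toEuclideanLin V (g₂ θ₀)⟫ • Matrix.toEuclideanLin V (g₂ θ₀),
            Matrix.toEuclideanLin V (fderiv ℝ g₂ θ₀ h)⟫)
    (hR : ∀ (V : Matrix (Fin n) (Fin n) ℝ) (h : EuclideanSpace ℝ (Fin P)),
      R V h =
        -(2 * ⟪(Matrix.toEuclideanLin V (g₂ θ₀) - zbar) -
              ⟪Matrix.toEuclideanLin V (g₂ θ₀) - zbar,
                Matrix.toEuclideanLin V (g₂ θ₀)⟫ • Matrix.toEuclideanLin V (g₂ θ₀),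
            Matrix.toEuclideanLin V (fderiv ℝ g₂ θ₀ h)⟫)) :
    B (-W) = R W := by
  funext h
  set w := Matrix.toEuclideanLin W (g₂ θ₀)
  set u := Matrix.toEuclideanLin W (fderiv ℝ g₂ θ₀ h)
  have hw_neg : ‖-w‖ = 1 := by rwa [norm_neg]
  calc B (-W) h = 2 * ⟪tangentialComponent (-w) (-w - zbar), -u⟫ := by
        rw [hB, map_neg, LinearMap.neg_apply, LinearMap.neg_apply]; rfl
    _ = 2 * ⟪tangentialComponent w zbar, u⟫ := by
        rw [tangentialComponent_self_sub hw_neg, tangentialComponent_neg_left, inner_neg_neg]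
    _ = -(2 * ⟪tangentialComponent w (w - zbar), u⟫) := by
        rw [tangentialComponent_self_sub hW, inner_neg_left, mul_neg, neg_neg]
    _ = R W h := (hR W h).symm

/-- The tangential cross-model θ-gradient of BYOL′ with predictor `-W` coincides with
that of RAFT with predictor `W`. -/
theorem projected_cross_model_theta_grad_correspondence
    {P n : ℕ}
    (g₂ : EuclideanSpace ℝ (Fin P) → EuclideanSpace ℝ (Fin n))
    (θ₀ : EuclideanSpace ℝ (Fin P))
    (hg₂ : DifferentiableAt ℝ g₂ θ₀)
    (zbar : EuclideanSpace ℝ (Fin n))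
    (W : Matrix (Fin n) (Fin n) ℝ)
    (hW : ‖Matrix.toEuclideanLin W (g₂ θ₀)‖ = 1)
    (B R : Matrix (Fin n) (Fin n) ℝ → EuclideanSpace ℝ (Fin P) → ℝ)
    (hB : ∀ (V : Matrix (Fin n) (Fin n) ℝ) (h : EuclideanSpace ℝ (Fin P)),
      B V h =
        2 * ⟪(Matrix.toEuclideanLin V (g₂ θ₀) - zbar) -
              ⟪Matrix.toEuclideanLin V (g₂ θ₀) - zbar,
                Matrix.toEuclideanLin V (g₂ θ₀)⟫ • Matrix.toEuclideanLin V (g₂ θ₀),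
            Matrix.toEuclideanLin V (fderiv ℝ g₂ θ₀ h)⟫)
    (hR : ∀ (V : Matrix (Fin n) (Fin n) ℝ) (h : EuclideanSpace ℝ (Fin P)),
      R V h =
        -(2 * ⟪(Matrix.toEuclideanLin V (g₂ θ₀) - zbar) -
              ⟪Matrix.toEuclideanLin V (g₂ θ₀) - zbar,
                Matrix.toEuclideanLin V (g₂ θ₀)⟫ • Matrix.toEuclideanLin V (g₂ θ₀),
            Matrix.toEuclideanLin V (fderiv ℝ g₂ θ₀ h)⟫)) :
    B (-W) = R W :=
  projected_cross_model_theta_grad_correspondence_general g₂ θ₀ zbar W hW B R hB hR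
end

section
/- Let g₂ : ℝ^P → ℝⁿ, let θ₀ ∈ ℝ^P, let z̄ ∈ ℝⁿ be a fixed vector, and let W be an n×n real matrix with ‖W·g₂(θ₀)‖ = 1 (Euclidean norm). For any n×n real matrix V with ‖V·g₂(θ₀)‖ = 1, define the projected BYOL′ cross-model W-gradient at (θ₀, V) as the linear functional on n×n real matrices B_V(K) = 2·⟨ Π_V( V·g₂(θ₀) − z̄ ), K·g₂(θ₀) ⟩, and the projected RAFT cross-model W-gradient at (θ₀, V) as R_V(K) = −2·⟨ Π_V( V·g₂(θ₀) − z̄ ), K·g₂(θ₀) ⟩, where Π_V(v) = v − ⟨v, V·g₂(θ₀)⟩·V·g₂(θ₀). Then B_{−W} = −R_W as linear functionals on the space of n×n real matrices. -/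
open RealInnerProductSpace

/-!
The tangential projection `v ↦ v - ⟪v, p⟫ • p` is unchanged when `p` is replaced by `-p`, and for a
unit vector `p` it kills `p`. Hence at `p = W g₂(θ₀)` both `-p - z̄` (seen from `-p`) and `p - z̄`
(seen from `p`) project to `-Π_p z̄`, so the two gradients agree up to the sign built into RAFT.
-/

section TangentialComponent

variable {E : Type*} [NormedAddCommGroup E] [InnerProductSpace ℝ E]

theorem tangentialComponent_sub (p v w : E) :
    tangentialComponent p (v - w) = tangentialComponent p v - tangentialComponent p w := by
  simp only [tangentialComponent, inner_sub_left, sub_smul]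
  abel

theorem tangentialComponent_neg (p v : E) :
    tangentialComponent p (-v) = -tangentialComponent p v := by
  simp only [tangentialComponent, inner_neg_left, neg_smul, neg_sub, sub_neg_eq_add]
  abel

theorem tangentialComponent_self {p : E} (hp : ‖p‖ = 1) : tangentialComponent p p = 0 := by
  rw [tangentialComponent, real_inner_self_eq_norm_sq, hp, one_pow, one_smul, sub_self]

theorem tangentialComponent_neg_sub_eq {p : E} (hp : ‖p‖ = 1) (z : E) :
    tangentialComponent (-p) (-p - z) = tangentialComponent p (p - z) := by
  rw [tangentialComponent_neg_left, tangentialComponent_sub, tangentialComponent_sub,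
    tangentialComponent_neg, tangentialComponent_self hp, neg_zero]

end TangentialComponent

/-- The tangential cross-model predictor-gradient of BYOL′ with predictor `-W` is the
negative of that of RAFT with predictor `W`. -/
theorem projected_cross_model_W_grad_correspondence
    {P n : ℕ}
    (g₂ : EuclideanSpace ℝ (Fin P) → EuclideanSpace ℝ (Fin n))
    (θ₀ : EuclideanSpace ℝ (Fin P))
    (zbar : EuclideanSpace ℝ (Fin n))
    (W : Matrix (Fin n) (Fin n) ℝ)
    (hW : ‖Matrix.toEuclideanLin W (g₂ θ₀)‖ = 1)
    (B R : Matrix (Fin n) (Fin n) ℝ → Matrix (Fin n) (Fin n) ℝ → ℝ)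
    (hB : ∀ (V K : Matrix (Fin n) (Fin n) ℝ),
      B V K =
        2 * ⟪(Matrix.toEuclideanLin V (g₂ θ₀) - zbar) -
              ⟪Matrix.toEuclideanLin V (g₂ θ₀) - zbar,
                Matrix.toEuclideanLin V (g₂ θ₀)⟫ • Matrix.toEuclideanLin V (g₂ θ₀),
            Matrix.toEuclideanLin K (g₂ θ₀)⟫)
    (hR : ∀ (V K : Matrix (Fin n) (Fin n) ℝ),
      R V K =
        -(2 * ⟪(Matrix.toEuclideanLin V (g₂ θ₀) - zbar) -
              ⟪Matrix.toEuclideanLin V (g₂ θ₀) - zbar,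
                Matrix.toEuclideanLin V (g₂ θ₀)⟫ • Matrix.toEuclideanLin V (g₂ θ₀),
            Matrix.toEuclideanLin K (g₂ θ₀)⟫)) :
    B (-W) = fun K => -(R W K) := by
  funext K
  have hproj := tangentialComponent_neg_sub_eq hW zbar
  rw [tangentialComponent, tangentialComponent] at hproj
  rw [hB, hR, neg_neg, map_neg, LinearMap.neg_apply, hproj]
end
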